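/- Let k ≥ 50 and let γ be the dominant root of x^k - 2x^{k-1} - ... - x - 1, g_k(z) = (z-1)/((k+1)z² - 3kz + k - 1), and φ = (1+√5)/2. Then |g_k(γ) - g_k(φ²)| < 4k/φ^k. -/

import Mathlib

noncomputable def φ : ℝ := (1 + Real.sqrt 5) / 2

def IsDomRoot (k : ℕ) (γ : ℝ) : Prop :=
  1 < γ ∧ γ ^ k = 2 * γ ^ (k - 1) + ∑ i ∈ Finset.range (k - 1), γ ^ i

noncomputable def g (k : ℕ) (z : ℝ) : ℝ :=
  (z - 1) / (((k : ℝ) + 1) * z ^ 2 - 3 * (k : ℝ) * z + ((k : ℝ) - 1))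

/-!
Multiplying the defining equation of `γ` by `γ - 1` gives `γ^(k-1) (γ² - 3γ + 1) = -1`, so `γ`
lies exponentially close to the root `φ²` of `z² - 3z + 1`: `0 < γ^(k-1) (φ² - γ) < 1`.
The denominator of `g_k` is `k (z² - 3z + 1) + z² - 1`, hence `g_k(φ²) = 1/(φ² + 1)` for every `k`,
and putting the two values of `g_k` over a common denominator leaves a numerator below `2k`
over a denominator above `γ^(k-1) > φ^k / 2`.
-/

lemma φ_sq : φ ^ 2 = φ + 1 := Real.goldenRatio_sq

lemma one_lt_φ : 1 < φ := Real.one_lt_goldenRatio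

lemma φ_lt_two : φ < 2 := Real.goldenRatio_lt_two

lemma φ_sq_sq_sub : (φ ^ 2) ^ 2 - 3 * φ ^ 2 + 1 = 0 := by
  linear_combination (φ ^ 2 + φ - 1) * φ_sq

lemma two_lt_φ_sq : 2 < φ ^ 2 := by
  rw [φ_sq]
  linarith [one_lt_φ]

lemma g_eq_sub_one_div (k : ℕ) (z : ℝ) :
    g k z = (z - 1) / (k * (z ^ 2 - 3 * z + 1) + (z ^ 2 - 1)) := by
  unfold g
  ring_nf

lemma g_φ_sq (k : ℕ) : g k (φ ^ 2) = 1 / (φ ^ 2 + 1) := by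
  have hq := two_lt_φ_sq
  rw [g_eq_sub_one_div, φ_sq_sq_sub, mul_zero, zero_add,
    div_eq_div_iff (by nlinarith) (by linarith)]
  ring

namespace IsDomRoot

variable {n : ℕ} {γ : ℝ}

lemma pos (h : IsDomRoot (n + 1) γ) : 0 < γ := by linarith [h.1]

lemma pow_mul_sq_sub (h : IsDomRoot (n + 1) γ) : γ ^ n * (γ ^ 2 - 3 * γ + 1) = -1 := by
  obtain ⟨-, heq⟩ := h
  simp only [Nat.add_sub_cancel] at heq
  linear_combination geom_sum_mul γ n + (γ - 1) * heq

lemma two_lt (h : IsDomRoot (n + 1) γ) (hn : 1 ≤ n) : 2 < γ := by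
  have hpow : 0 < γ ^ n := pow_pos h.pos n
  obtain ⟨hγ, heq⟩ := h
  simp only [Nat.add_sub_cancel] at heq
  have hsum : 0 < ∑ i ∈ Finset.range n, γ ^ i :=
    Finset.sum_pos (fun i _ => by positivity) (Finset.nonempty_range_iff.mpr (by omega))
  nlinarith [pow_succ γ n]

/-- `φ²` and `3 - φ²` are the roots of `z² - 3z + 1`. -/
lemma pow_mul_φ_sq_sub_mul (h : IsDomRoot (n + 1) γ) :
    γ ^ n * ((φ ^ 2 - γ) * (γ + φ ^ 2 - 3)) = 1 := by
  linear_combination γ ^ n * φ_sq_sq_sub - h.pow_mul_sq_sub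

lemma lt_φ_sq (h : IsDomRoot (n + 1) γ) : γ < φ ^ 2 := by
  have hprod := h.pow_mul_φ_sq_sub_mul
  by_contra! hle
  have hneg : (φ ^ 2 - γ) * (γ + φ ^ 2 - 3) ≤ 0 :=
    mul_nonpos_of_nonpos_of_nonneg (sub_nonpos.mpr hle) (by linarith [two_lt_φ_sq])
  nlinarith [mul_nonpos_of_nonneg_of_nonpos (pow_pos h.pos n).le hneg]

lemma pow_mul_φ_sq_sub_pos (h : IsDomRoot (n + 1) γ) : 0 < γ ^ n * (φ ^ 2 - γ) :=
  mul_pos (pow_pos h.pos n) (sub_pos.mpr h.lt_φ_sq)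

lemma pow_mul_φ_sq_sub_lt_one (h : IsDomRoot (n + 1) γ) (hn : 1 ≤ n) :
    γ ^ n * (φ ^ 2 - γ) < 1 := by
  have hw : 1 < γ + φ ^ 2 - 3 := by linarith [h.two_lt hn, two_lt_φ_sq]
  have hprod := h.pow_mul_φ_sq_sub_mul
  rw [← mul_assoc] at hprod
  nlinarith [mul_lt_mul_of_pos_left hw h.pow_mul_φ_sq_sub_pos]

lemma natCast_add_one_lt_pow (h : IsDomRoot (n + 1) γ) (hn : 1 ≤ n) :
    (n : ℝ) + 1 < γ ^ n := by
  have h2n : ((n : ℝ) + 1) ≤ 2 ^ n := by exact_mod_cast n.lt_two_pow_self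
  have h2γ : (2 : ℝ) ^ n < γ ^ n := pow_lt_pow_left₀ (h.two_lt hn) (by norm_num) (by omega)
  linarith

lemma φ_pow_succ_lt (h : IsDomRoot (n + 1) γ) (hn : 1 ≤ n) : φ ^ (n + 1) < 2 * γ ^ n := by
  have hφ := one_lt_φ
  have hφγ : φ ^ n ≤ γ ^ n :=
    pow_le_pow_left₀ (by linarith) (by linarith [h.two_lt hn, φ_lt_two]) n
  calc φ ^ (n + 1) = φ ^ n * φ := pow_succ φ n
    _ < φ ^ n * 2 := mul_lt_mul_of_pos_left φ_lt_two (by positivity)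
    _ ≤ 2 * γ ^ n := by linarith

lemma pow_lt_pow_mul_sq_sub_one_sub (h : IsDomRoot (n + 1) γ) (hn : 1 ≤ n) :
    γ ^ n < γ ^ n * (γ ^ 2 - 1) - (n + 1) := by
  have hγ := h.two_lt hn
  have hsq : (0 : ℝ) < γ ^ 2 - 3 := by nlinarith
  nlinarith [h.natCast_add_one_lt_pow hn, mul_pos (pow_pos h.pos n) hsq]

lemma g_eq (h : IsDomRoot (n + 1) γ) :
    g (n + 1) γ = γ ^ n * (γ - 1) / (γ ^ n * (γ ^ 2 - 1) - (n + 1)) := by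
  rw [g_eq_sub_one_div, ← mul_div_mul_left _ _ (pow_pos h.pos n).ne']
  congr 1
  push_cast
  linear_combination (n + 1 : ℝ) * h.pow_mul_sq_sub

lemma g_sub_g_φ_sq (h : IsDomRoot (n + 1) γ) (hn : 1 ≤ n) :
    g (n + 1) γ - g (n + 1) (φ ^ 2) =
      ((γ - 1) * (γ ^ n * (φ ^ 2 - γ)) + (n + 1)) /
        ((φ ^ 2 + 1) * (γ ^ n * (γ ^ 2 - 1) - (n + 1))) := by
  have hden : 0 < γ ^ n * (γ ^ 2 - 1) - (n + 1) :=
    (pow_pos h.pos n).trans (h.pow_lt_pow_mul_sq_sub_one_sub hn)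
  rw [h.g_eq, g_φ_sq, div_sub_div _ _ hden.ne' (by positivity)]
  congr 1 <;> ring

lemma abs_g_sub_g_φ_sq_lt (h : IsDomRoot (n + 1) γ) (hn : 1 ≤ n) :
    |g (n + 1) γ - g (n + 1) (φ ^ 2)| < 2 * (n + 1) / γ ^ n := by
  have hpow : 0 < γ ^ n := pow_pos h.pos n
  have hγ : 1 < γ := h.1
  have hγφ : γ - 1 < φ := by linarith [h.lt_φ_sq, φ_sq]
  have hφ := φ_lt_two
  have hn' : (1 : ℝ) ≤ n := by exact_mod_cast hn
  have hnum_pos : 0 < (γ - 1) * (γ ^ n * (φ ^ 2 - γ)) + (n + 1) := by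
    have := mul_pos (sub_pos.mpr hγ) h.pow_mul_φ_sq_sub_pos
    positivity
  have hnum : (γ - 1) * (γ ^ n * (φ ^ 2 - γ)) + (n + 1) < 2 * (n + 1) := by
    nlinarith [mul_lt_mul_of_pos_left (h.pow_mul_φ_sq_sub_lt_one hn) (sub_pos.mpr hγ)]
  have hden : γ ^ n ≤ (φ ^ 2 + 1) * (γ ^ n * (γ ^ 2 - 1) - (n + 1)) := by
    nlinarith [h.pow_lt_pow_mul_sq_sub_one_sub hn, two_lt_φ_sq]
  rw [h.g_sub_g_φ_sq hn, abs_of_pos (div_pos hnum_pos (by linarith))]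
  exact div_lt_div₀ hnum hden (by positivity) hpow

end IsDomRoot

theorem g_gamma_close_to_g_phi_sq (k : ℕ) (hk : 50 ≤ k) (γ : ℝ) (hγ : IsDomRoot k γ) :
    |g k γ - g k (φ ^ 2)| < 4 * (k : ℝ) / φ ^ k := by
  obtain ⟨n, rfl⟩ : ∃ n, k = n + 1 := ⟨k - 1, by omega⟩
  have hn : 1 ≤ n := by omega
  have hpow : 0 < γ ^ n := pow_pos hγ.pos n
  have hφ : 0 < φ := zero_lt_one.trans one_lt_φ
  calc |g (n + 1) γ - g (n + 1) (φ ^ 2)| < 2 * (n + 1) / γ ^ n := hγ.abs_g_sub_g_φ_sq_lt hn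
    _ = 4 * (n + 1) / (2 * γ ^ n) := by field_simp; ring
    _ < 4 * ((n + 1 : ℕ) : ℝ) / φ ^ (n + 1) := by
      push_cast
      exact div_lt_div_of_pos_left (by positivity) (by positivity) (hγ.φ_pow_succ_lt hn)
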